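/- arXiv:1607.03676 — 2 statements merged into one kernel-verified Lean document; each statement's English description precedes it below -/
import Mathlib

section
/- Let μ_n(x) := min_{0 ≤ k ≤ n} ( |x|²/(2 t_k²) + t_k ), where t_k = kΔt for a fixed Δt > 0, with the convention |x|²/(2 t_0²) = 0 if x = 0 and +∞ if x ≠ 0. Then (μ_n) satisfies the recursion μ_{n+1}(x) = min( min_{v∈ℝⁿ}( φ⁰(x − t_{n+1}v, v) ) + t_{n+1}, min_{0≤k≤n}( min_{v∈ℝⁿ}( |v|²/2 + μ_{n−k}(x − t_k v) ) + t_k ) ), where φ⁰(y,v) = 0_{y=0} + |v|²/2 (the indicator 0_{y=0} being 0 if y = 0 and +∞ otherwise). -/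
/-!
Splitting off the last index, `μ_{N+1}(x) = min (|x|²/(2t_{N+1}²) + t_{N+1}) (μ_N(x))`.
The first entry of the recursion is `|x|²/(2t_{N+1}²) + t_{N+1}`, the minimum being attained
at `v = x / t_{N+1}`. The second entry is `μ_N(x)`: the choice `k = 0`, `v = 0` gives `μ_N(x)`,
and conversely, for `x = y + t_k v`, the triangle inequality and an elementary quadratic inequality give
`|x|²/(2t_{j+k}²) ≤ |y|²/(2t_j²) + |v|²/2`, so every term of the double minimum dominates the
term of index `j + k ≤ N` of `μ_N(x)`.
-/

open scoped ENNReal Classical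

noncomputable def tgrid (Δt : ℝ) (k : ℕ) : ℝ := k * Δt

noncomputable def parab (n : ℕ) (Δt : ℝ) (k : ℕ) (y : EuclideanSpace ℝ (Fin n)) : ℝ≥0∞ :=
  if tgrid Δt k = 0 then (if y = 0 then (0:ℝ≥0∞) else ⊤)
  else ENNReal.ofReal (‖y‖ ^ 2 / (2 * (tgrid Δt k) ^ 2))

noncomputable def muN (n : ℕ) (Δt : ℝ) (N : ℕ) (x : EuclideanSpace ℝ (Fin n)) : ℝ≥0∞ :=
  ⨅ k ∈ Finset.range (N + 1), (parab n Δt k x + ENNReal.ofReal (tgrid Δt k))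

noncomputable def phi0 (n : ℕ) (y v : EuclideanSpace ℝ (Fin n)) : ℝ≥0∞ :=
  (if y = 0 then (0:ℝ≥0∞) else ⊤) + ENNReal.ofReal (‖v‖ ^ 2 / 2)

lemma add_mul_sq_div_le {a b : ℝ} (ha : 0 < a) (hb : 0 < b) (p q : ℝ) :
    (p + b * q) ^ 2 / (2 * (a + b) ^ 2) ≤ p ^ 2 / (2 * a ^ 2) + q ^ 2 / 2 := by
  have hsplit : p ^ 2 / (2 * a ^ 2) + q ^ 2 / 2 = (p ^ 2 + a ^ 2 * q ^ 2) / (2 * a ^ 2) := by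
    field_simp
  rw [hsplit, div_le_div_iff₀ (by positivity) (by positivity)]
  -- the difference of the two sides is `2((b p - a² q)² + 2ab p² + 2a³b q²)`
  have hab : 0 < a * b := mul_pos ha hb
  nlinarith [sq_nonneg (b * p - a ^ 2 * q), mul_nonneg hab.le (sq_nonneg p),
    mul_nonneg (mul_nonneg hab.le (sq_nonneg a)) (sq_nonneg q)]

section Grid

variable {n : ℕ} {Δt : ℝ}

@[simp]
lemma tgrid_zero (Δt : ℝ) : tgrid Δt 0 = 0 := by
  simp [tgrid]

lemma tgrid_add (Δt : ℝ) (j k : ℕ) : tgrid Δt (j + k) = tgrid Δt j + tgrid Δt k := by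
  unfold tgrid; push_cast; ring

lemma tgrid_nonneg (hΔ : 0 < Δt) (k : ℕ) : 0 ≤ tgrid Δt k := by
  unfold tgrid; positivity

lemma tgrid_pos (hΔ : 0 < Δt) {k : ℕ} (hk : 0 < k) : 0 < tgrid Δt k := by
  unfold tgrid; positivity

lemma parab_zero (y : EuclideanSpace ℝ (Fin n)) :
    parab n Δt 0 y = if y = 0 then 0 else ⊤ := by
  simp [parab]

lemma parab_of_pos (hΔ : 0 < Δt) {k : ℕ} (hk : 0 < k) (y : EuclideanSpace ℝ (Fin n)) :
    parab n Δt k y = ENNReal.ofReal (‖y‖ ^ 2 / (2 * (tgrid Δt k) ^ 2)) :=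
  if_neg (tgrid_pos hΔ hk).ne'

lemma parab_tgrid_smul (hΔ : 0 < Δt) {k : ℕ} (hk : 0 < k) (v : EuclideanSpace ℝ (Fin n)) :
    parab n Δt k (tgrid Δt k • v) = ENNReal.ofReal (‖v‖ ^ 2 / 2) := by
  have ht := tgrid_pos hΔ hk
  rw [parab_of_pos hΔ hk, norm_smul, Real.norm_eq_abs, abs_of_pos ht]
  congr 1
  field_simp

lemma parab_add_le (hΔ : 0 < Δt) (j k : ℕ) (y v : EuclideanSpace ℝ (Fin n)) :
    parab n Δt (j + k) (y + tgrid Δt k • v) ≤ ENNReal.ofReal (‖v‖ ^ 2 / 2) + parab n Δt j y := by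
  rcases Nat.eq_zero_or_pos k with rfl | hk
  · simp
  rcases Nat.eq_zero_or_pos j with rfl | hj
  · by_cases hy : y = 0
    · simp [hy, parab_tgrid_smul hΔ hk, parab_zero]
    · simp [hy, parab_zero]
  have htj := tgrid_pos hΔ hj
  have htk := tgrid_pos hΔ hk
  rw [parab_of_pos hΔ (by omega), parab_of_pos hΔ hj, ← ENNReal.ofReal_add (by positivity)
    (by positivity), add_comm (‖v‖ ^ 2 / 2)]
  gcongr
  have hnorm : ‖y + tgrid Δt k • v‖ ≤ ‖y‖ + tgrid Δt k * ‖v‖ := by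
    simpa [norm_smul, abs_of_pos htk] using norm_add_le y (tgrid Δt k • v)
  calc ‖y + tgrid Δt k • v‖ ^ 2 / (2 * tgrid Δt (j + k) ^ 2)
      ≤ (‖y‖ + tgrid Δt k * ‖v‖) ^ 2 / (2 * (tgrid Δt j + tgrid Δt k) ^ 2) := by
        rw [tgrid_add]; gcongr
    _ ≤ ‖y‖ ^ 2 / (2 * tgrid Δt j ^ 2) + ‖v‖ ^ 2 / 2 := add_mul_sq_div_le htj htk _ _

lemma iInf_phi0_eq_parab (hΔ : 0 < Δt) {k : ℕ} (hk : 0 < k) (x : EuclideanSpace ℝ (Fin n)) :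
    ⨅ v, phi0 n (x - tgrid Δt k • v) v = parab n Δt k x := by
  have ht := (tgrid_pos hΔ hk).ne'
  refine le_antisymm (iInf_le_of_le ((tgrid Δt k)⁻¹ • x) ?_) (le_iInf fun v => ?_)
  · have hx : tgrid Δt k • (tgrid Δt k)⁻¹ • x = x := smul_inv_smul₀ ht x
    simp only [phi0, hx, sub_self, if_pos, zero_add]
    rw [← parab_tgrid_smul hΔ hk, hx]
  · by_cases hv : x - tgrid Δt k • v = 0
    · rw [sub_eq_zero.mp hv, phi0, sub_self, if_pos rfl, zero_add, parab_tgrid_smul hΔ hk]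
    · simp [phi0, hv]

lemma muN_succ (N : ℕ) (x : EuclideanSpace ℝ (Fin n)) :
    muN n Δt (N + 1) x =
      min (parab n Δt (N + 1) x + ENNReal.ofReal (tgrid Δt (N + 1))) (muN n Δt N x) := by
  rw [muN, Finset.range_add_one, Finset.iInf_insert, muN]

lemma muN_le_add_muN_sub (hΔ : 0 < Δt) {N k : ℕ} (hk : k ≤ N) (x v : EuclideanSpace ℝ (Fin n)) :
    muN n Δt N (x + tgrid Δt k • v) ≤
      ENNReal.ofReal (‖v‖ ^ 2 / 2) + muN n Δt (N - k) x + ENNReal.ofReal (tgrid Δt k) := by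
  simp only [muN, ENNReal.add_iInf, ENNReal.iInf_add]
  refine le_iInf₂ fun j hj => ?_
  have hjk : j + k ∈ Finset.range (N + 1) := by
    simp only [Finset.mem_range] at hj ⊢
    omega
  calc ⨅ i ∈ Finset.range (N + 1), parab n Δt i (x + tgrid Δt k • v) + ENNReal.ofReal (tgrid Δt i)
      ≤ parab n Δt (j + k) (x + tgrid Δt k • v) + ENNReal.ofReal (tgrid Δt (j + k)) :=
        iInf₂_le (j + k) hjk
    _ ≤ ENNReal.ofReal (‖v‖ ^ 2 / 2) + parab n Δt j x + ENNReal.ofReal (tgrid Δt (j + k)) := by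
        gcongr; exact parab_add_le hΔ j k x v
    _ = ENNReal.ofReal (‖v‖ ^ 2 / 2) + (parab n Δt j x + ENNReal.ofReal (tgrid Δt j))
          + ENNReal.ofReal (tgrid Δt k) := by
        rw [tgrid_add, ENNReal.ofReal_add (tgrid_nonneg hΔ j) (tgrid_nonneg hΔ k)]
        ring

lemma iInf_hopfLax_eq_muN (hΔ : 0 < Δt) (N : ℕ) (x : EuclideanSpace ℝ (Fin n)) :
    ⨅ k ∈ Finset.range (N + 1),
        ((⨅ v, ENNReal.ofReal (‖v‖ ^ 2 / 2) + muN n Δt (N - k) (x - tgrid Δt k • v))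
          + ENNReal.ofReal (tgrid Δt k)) = muN n Δt N x := by
  refine le_antisymm ?_ (le_iInf₂ fun k hk => ?_)
  · refine (iInf₂_le 0 (by simp)).trans ?_
    refine (add_le_add_left (iInf_le _ 0) _).trans ?_
    simp
  · rw [ENNReal.iInf_add]
    refine le_iInf fun v => ?_
    simpa using muN_le_add_muN_sub hΔ (Nat.lt_succ_iff.mp (Finset.mem_range.mp hk))
      (x - tgrid Δt k • v) v

end Grid

theorem stmt_5 (n : ℕ) (Δt : ℝ) (hΔ : 0 < Δt) (N : ℕ) (x : EuclideanSpace ℝ (Fin n)) :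
    muN n Δt (N + 1) x =
      min
        ((⨅ v : EuclideanSpace ℝ (Fin n), phi0 n (x - tgrid Δt (N + 1) • v) v)
          + ENNReal.ofReal (tgrid Δt (N + 1)))
        (⨅ k ∈ Finset.range (N + 1),
          ((⨅ v : EuclideanSpace ℝ (Fin n),
              (ENNReal.ofReal (‖v‖ ^ 2 / 2) + muN n Δt (N - k) (x - tgrid Δt k • v)))
            + ENNReal.ofReal (tgrid Δt k))) := by
  rw [iInf_phi0_eq_parab hΔ N.succ_pos, iInf_hopfLax_eq_muN hΔ, muN_succ]
end

section
/- Let A > 1, B > 0, C > 0 and T > 0 with T < 1/(4√(AB)). Set B₁ = 4AB/(1 − 4ABT²) and R ≥ √(2AC(1 + T²B₁)). Then for any t ∈ [0,T), x ∈ ℝⁿ and v₀ ∈ ℝⁿ satisfying |v₀|² ≤ 2A(B|x|² + C), one has |v₀|² − B₁|x − t v₀|² − R² ≤ 0. -/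
set_option maxHeartbeats 1600000 in
theorem stmt_14 (n : ℕ) (A B C T B₁ R t : ℝ)
    (hA : 1 < A) (hB : 0 < B) (hC : 0 < C) (hT : 0 < T)
    (hT0 : T < 1 / (4 * Real.sqrt (A * B)))
    (hB₁ : B₁ = 4 * A * B / (1 - 4 * A * B * T ^ 2))
    (hR : Real.sqrt (2 * A * C * (1 + T ^ 2 * B₁)) ≤ R)
    (ht : t ∈ Set.Ico 0 T)
    (x v₀ : EuclideanSpace ℝ (Fin n))
    (hv : ‖v₀‖ ^ 2 ≤ 2 * A * (B * ‖x‖ ^ 2 + C)) :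
    ‖v₀‖ ^ 2 - B₁ * ‖x - t • v₀‖ ^ 2 - R ^ 2 ≤ 0 := by
  obtain ⟨ht0, htT⟩ := ht
  have hAB : (0:ℝ) < A * B := by positivity
  have hs : 0 < Real.sqrt (A * B) := Real.sqrt_pos.mpr hAB
  have hsq : Real.sqrt (A * B) ^ 2 = A * B := Real.sq_sqrt hAB.le
  have hT0' : T * (4 * Real.sqrt (A * B)) < 1 := (lt_div_iff₀ (by positivity)).mp hT0
  have hden : 0 < 1 - 4 * A * B * T ^ 2 := by
    nlinarith [mul_pos hT hs, hsq, hT0', mul_pos (mul_pos hT hs) (mul_pos hT hs)]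
  have hB₁pos : 0 < B₁ := by rw [hB₁]; positivity
  have hB₁eq : B₁ * (1 - 4 * A * B * T ^ 2) = 4 * A * B := by
    rw [hB₁]; field_simp
  have hRarg : (0:ℝ) ≤ 2 * A * C * (1 + T ^ 2 * B₁) := by positivity
  have hR2 : 2 * A * C * (1 + T ^ 2 * B₁) ≤ R ^ 2 := by
    have hR0 : 0 ≤ R := le_trans (Real.sqrt_nonneg _) hR
    nlinarith [Real.sq_sqrt hRarg, Real.sqrt_nonneg (2 * A * C * (1 + T ^ 2 * B₁))]
  set a := ‖x‖ with ha
  set b := ‖v₀‖ with hb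
  have ha0 : 0 ≤ a := norm_nonneg _
  have hb0 : 0 ≤ b := norm_nonneg _
  have hnorm : (a - t * b) ^ 2 ≤ ‖x - t • v₀‖ ^ 2 := by
    have h1 : |a - t * b| ≤ ‖x - t • v₀‖ := by
      have := abs_norm_sub_norm_le x (t • v₀)
      rwa [norm_smul, Real.norm_eq_abs, abs_of_nonneg ht0] at this
    calc (a - t * b) ^ 2 = |a - t * b| ^ 2 := by rw [sq_abs]
      _ ≤ ‖x - t • v₀‖ ^ 2 := by
          apply sq_le_sq' <;> nlinarith [abs_nonneg (a - t*b), norm_nonneg (x - t • v₀)]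
  have htT2 : t ^ 2 ≤ T ^ 2 := by nlinarith
  have hstep3 : b ^ 2 * (1 + B₁ * t ^ 2) ≤ (2 * A * (B * a ^ 2 + C)) * (1 + B₁ * t ^ 2) := by
    apply mul_le_mul_of_nonneg_right hv
    positivity
  nlinarith [mul_nonneg hB₁pos.le (sq_nonneg (a - 2 * t * b)),
    mul_le_mul_of_nonneg_left hnorm hB₁pos.le,
    hstep3, hR2, hB₁eq,
    mul_nonneg (sq_nonneg a) (mul_nonneg (by positivity : (0:ℝ) ≤ 2 * A * B * B₁) (sub_nonneg.mpr htT2)),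
    mul_nonneg (by positivity : (0:ℝ) ≤ 2 * A * C * B₁) (sub_nonneg.mpr htT2)]
end
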